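/- A permutation avoids the generalized pattern 2-13 if and only if it avoids the classical pattern 2-1-3, i.e., there is no triple of indices i < j < k with π(j) < π(i) < π(k). -/
import Mathlib


def contains213 {n : ℕ} (π : Equiv.Perm (Fin n)) : Prop :=
  ∃ i j : ℕ, ∃ (_ : i < j) (hj : j + 1 < n),
    π ⟨j, by omega⟩ < π ⟨i, by omega⟩ ∧ π ⟨i, by omega⟩ < π ⟨j + 1, hj⟩

def containsClassical213 {n : ℕ} (π : Equiv.Perm (Fin n)) : Prop :=
  ∃ i j k : Fin n, i < j ∧ j < k ∧ π j < π i ∧ π i < π k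

private lemma aux213 {n : ℕ} (π : Equiv.Perm (Fin n)) (i : ℕ) (hi : i < n) :
    ∀ d j k (hjk : j < k) (hk : k < n), k - j = d → i < j →
    π ⟨j, by omega⟩ < π ⟨i, hi⟩ → π ⟨i, hi⟩ < π ⟨k, hk⟩ → contains213 π := by
  intro d
  induction d using Nat.strong_induction_on with
  | _ d ih =>
    intro j k hjk hk hd hij h1 h2
    have hj1 : j + 1 < n := by omega
    rcases lt_trichotomy (π ⟨j + 1, hj1⟩) (π ⟨i, hi⟩) with h | h | h
    · have hjk' : j + 1 < k := by
        rcases Nat.lt_or_ge (j + 1) k with hh | hh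
        · exact hh
        · exfalso
          have hek : j + 1 = k := by omega
          have : (⟨j + 1, hj1⟩ : Fin n) = ⟨k, hk⟩ := by simp [hek]
          rw [this] at h
          exact absurd h2 (not_lt.2 h.le)
      exact ih (k - (j + 1)) (by omega) (j + 1) k hjk' hk rfl (by omega) h h2
    · exfalso
      have heq : (⟨j + 1, hj1⟩ : Fin n) = ⟨i, hi⟩ := π.injective h
      have : j + 1 = i := Fin.mk.inj_iff.mp heq
      omega
    · exact ⟨i, j, hij, hj1, h1, h⟩

theorem stmt3 (n : ℕ) (π : Equiv.Perm (Fin n)) :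
    ¬ contains213 π ↔ ¬ containsClassical213 π := by
  constructor
  · intro h hc
    apply h
    obtain ⟨i, j, k, hij, hjk, h1, h2⟩ := hc
    exact aux213 π i.1 i.2 (k.1 - j.1) j.1 k.1 hjk k.2 rfl hij h1 h2
  · intro h hc
    apply h
    obtain ⟨i, j, hij, hj1, h1, h2⟩ := hc
    exact ⟨⟨i, by omega⟩, ⟨j, by omega⟩, ⟨j + 1, hj1⟩, hij, by simp, h1, h2⟩
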